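/- arXiv:1812.07118 — 2 statements merged into one kernel-verified Lean document; each statement's English description precedes it below -/
import Mathlib

section
/- Let z : [0, ∞) → [0, ∞) be continuous and nonincreasing in the integrated sense: suppose z(t) + ∫ₛᵗ z(τ) dτ ≤ K z(s) for all 0 ≤ s ≤ t and some constant K ≥ 1. Then there exist M ≥ 1 and ω > 0 (depending only on K) such that z(t) ≤ M e^{−ωt} z(0) for all t ≥ 0. -/
open MeasureTheory

/-- Datko/Pazy-type lemma: if `z(t) + ∫ₛᵗ z ≤ K z(s)` for all `0 ≤ s ≤ t`, then `z`
decays exponentially. -/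
theorem stmt9 (z : ℝ → ℝ) (hcont : ContinuousOn z (Set.Ici 0))
    (hnn : ∀ t : ℝ, 0 ≤ t → 0 ≤ z t) (K : ℝ) (hK : 1 ≤ K)
    (hineq : ∀ s t : ℝ, 0 ≤ s → s ≤ t → z t + ∫ τ in s..t, z τ ≤ K * z s) :
    ∃ M ω : ℝ, 1 ≤ M ∧ 0 < ω ∧ ∀ t : ℝ, 0 ≤ t → z t ≤ M * Real.exp (-ω * t) * z 0 := by
  have hK0 : (0:ℝ) < K := lt_of_lt_of_le one_pos hK
  -- integrability
  have hint : ∀ s t : ℝ, 0 ≤ s → s ≤ t → IntervalIntegrable z volume s t := by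
    intro s t hs hst
    apply ContinuousOn.intervalIntegrable
    apply hcont.mono
    rw [Set.uIcc_of_le hst]
    intro x hx
    exact le_trans hs hx.1
  -- Lemma A : z t ≤ K * z s
  have hA : ∀ s t : ℝ, 0 ≤ s → s ≤ t → z t ≤ K * z s := by
    intro s t hs hst
    have h1 := hineq s t hs hst
    have h2 : (0:ℝ) ≤ ∫ τ in s..t, z τ := by
      apply intervalIntegral.integral_nonneg hst
      intro u hu
      exact hnn u (le_trans hs hu.1)
    linarith
  set T : ℝ := 2 * K ^ 2 with hT
  have hT0 : 0 < T := by positivity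
  -- Lemma B : halving
  have hB : ∀ s : ℝ, 0 ≤ s → z (s + T) ≤ z s / 2 := by
    intro s hs
    have hst : s ≤ s + T := by linarith
    have h1 := hineq s (s + T) hs hst
    have hlow : T * (z (s + T) / K) ≤ ∫ τ in s..(s + T), z τ := by
      have hcmp : ∫ τ in s..(s + T), (z (s + T) / K) ≤ ∫ τ in s..(s + T), z τ := by
        apply intervalIntegral.integral_mono_on hst (intervalIntegrable_const)
          (hint s (s + T) hs hst)
        intro u hu
        have := hA u (s + T) (le_trans hs hu.1) hu.2
        rw [div_le_iff₀ hK0]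
        linarith [this]
      rwa [intervalIntegral.integral_const, smul_eq_mul, add_sub_cancel_left] at hcmp
    have hz : 0 ≤ z (s + T) := hnn _ (by linarith)
    have hTK : T * (z (s + T) / K) = 2 * K * z (s + T) := by
      field_simp [hT]
      ring
    rw [hTK] at hlow
    nlinarith [hnn s hs]
  -- Lemma C : geometric decay along nT
  have hC : ∀ n : ℕ, z (n * T) ≤ (1/2)^n * z 0 := by
    intro n
    induction n with
    | zero => simp
    | succ n ih =>
      have hn : (0:ℝ) ≤ n * T := by positivity
      have := hB (n * T) hn
      have hstep : ((n+1 : ℕ) : ℝ) * T = n * T + T := by push_cast; ring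
      rw [hstep]
      calc z (n * T + T) ≤ z (n * T) / 2 := this
        _ ≤ ((1/2)^n * z 0) / 2 := by linarith
        _ = (1/2)^(n+1) * z 0 := by ring
  refine ⟨2 * K, Real.log 2 / T, by linarith, by positivity, ?_⟩
  intro t ht
  set n : ℕ := ⌊t / T⌋₊ with hn
  have hnle : (n : ℝ) * T ≤ t := by
    rw [← le_div_iff₀ hT0]
    exact Nat.floor_le (by positivity)
  have hlt : t / T < n + 1 := Nat.lt_floor_add_one _
  have h1 : z t ≤ K * z (n * T) := hA (n * T) t (by positivity) hnle
  have h2 := hC n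
  have hz0 : 0 ≤ z 0 := hnn 0 le_rfl
  have h3 : ((1:ℝ)/2)^n ≤ 2 * Real.exp (-(Real.log 2 / T) * t) := by
    have : ((1:ℝ)/2)^n = Real.exp (-(n : ℝ) * Real.log 2) := by
      rw [← Real.exp_log (show (0:ℝ) < 1/2 by norm_num), ← Real.exp_nat_mul]
      congr 1
      rw [Real.log_div one_ne_zero two_ne_zero, Real.log_one]
      ring
    rw [this]
    have h4 : -(n : ℝ) * Real.log 2 ≤ Real.log 2 + (-(Real.log 2 / T) * t) := by
      have hlog2 : 0 < Real.log 2 := Real.log_pos (by norm_num)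
      have : t / T < n + 1 := hlt
      have ht' : t / T * Real.log 2 < (n + 1) * Real.log 2 := by
        exact mul_lt_mul_of_pos_right this hlog2
      have : Real.log 2 / T * t = t / T * Real.log 2 := by ring
      nlinarith [this, ht']
    calc Real.exp (-(n:ℝ) * Real.log 2)
        ≤ Real.exp (Real.log 2 + (-(Real.log 2 / T) * t)) := Real.exp_le_exp.mpr h4
      _ = 2 * Real.exp (-(Real.log 2 / T) * t) := by
          rw [Real.exp_add, Real.exp_log two_pos]
  calc z t ≤ K * z (n * T) := h1
    _ ≤ K * ((1/2)^n * z 0) := by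
        apply mul_le_mul_of_nonneg_left h2 (le_of_lt hK0)
    _ ≤ K * ((2 * Real.exp (-(Real.log 2 / T) * t)) * z 0) := by
        apply mul_le_mul_of_nonneg_left _ (le_of_lt hK0)
        exact mul_le_mul_of_nonneg_right h3 hz0
    _ = 2 * K * Real.exp (-(Real.log 2 / T) * t) * z 0 := by ring
end

section
/- Let e, d, z : [0, T*) → [0, ∞) be continuous functions satisfying a dissipativity inequality e(t) + ∫ₛᵗ d(τ)dτ ≤ e(s) + c₁∫ₛᵗ z^{3/2}(τ)dτ and an observability inequality ∫ₛᵗ e(τ)dτ ≤ c₂∫ₛᵗ d(τ)dτ + c₃(e(t) + e(s)) + c₄∫ₛᵗ z^{3/2}(τ)dτ for all 0 ≤ s ≤ t < T*, with constants cᵢ > 0. Then there exist constants C₁, C₂ > 0 depending only on c₁,…,c₄ such that e(t) + ∫ₛᵗ e(τ)dτ ≤ C₁ e(s) + C₂ ∫ₛᵗ z^{3/2}(τ)dτ for all 0 ≤ s ≤ t < T*. -/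
open MeasureTheory
open scoped ENNReal

/-- Combining dissipativity and observability inequalities yields the incomplete
stabilizability inequality `e(t) + ∫ₛᵗ e ≤ C₁ e(s) + C₂ ∫ₛᵗ z^{3/2}`. -/
theorem stmt10 (Tstar : ℝ≥0∞) (hT : 0 < Tstar) (e d z : ℝ → ℝ)
    (he : ContinuousOn e {τ : ℝ | 0 ≤ τ ∧ ENNReal.ofReal τ < Tstar})
    (hd : ContinuousOn d {τ : ℝ | 0 ≤ τ ∧ ENNReal.ofReal τ < Tstar})
    (hz : ContinuousOn z {τ : ℝ | 0 ≤ τ ∧ ENNReal.ofReal τ < Tstar})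
    (hen : ∀ τ : ℝ, 0 ≤ τ → ENNReal.ofReal τ < Tstar → 0 ≤ e τ)
    (hdn : ∀ τ : ℝ, 0 ≤ τ → ENNReal.ofReal τ < Tstar → 0 ≤ d τ)
    (hzn : ∀ τ : ℝ, 0 ≤ τ → ENNReal.ofReal τ < Tstar → 0 ≤ z τ)
    (c₁ c₂ c₃ c₄ : ℝ) (hc₁ : 0 < c₁) (hc₂ : 0 < c₂) (hc₃ : 0 < c₃) (hc₄ : 0 < c₄)
    (hdiss : ∀ s t : ℝ, 0 ≤ s → s ≤ t → ENNReal.ofReal t < Tstar →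
      e t + ∫ τ in s..t, d τ ≤ e s + c₁ * ∫ τ in s..t, z τ * Real.sqrt (z τ))
    (hobs : ∀ s t : ℝ, 0 ≤ s → s ≤ t → ENNReal.ofReal t < Tstar →
      (∫ τ in s..t, e τ) ≤ c₂ * (∫ τ in s..t, d τ) + c₃ * (e t + e s)
        + c₄ * ∫ τ in s..t, z τ * Real.sqrt (z τ)) :
    ∃ C₁ C₂ : ℝ, 0 < C₁ ∧ 0 < C₂ ∧
      ∀ s t : ℝ, 0 ≤ s → s ≤ t → ENNReal.ofReal t < Tstar →
        e t + ∫ τ in s..t, e τ ≤ C₁ * e s + C₂ * ∫ τ in s..t, z τ * Real.sqrt (z τ) := by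
  refine ⟨1 + c₂ + 2 * c₃, c₁ * (1 + c₂ + c₃) + c₄, by positivity, by positivity, ?_⟩
  intro s t hs hst ht
  have hts : ENNReal.ofReal s < Tstar := lt_of_le_of_lt (ENNReal.ofReal_le_ofReal hst) ht
  have hIZ : 0 ≤ ∫ τ in s..t, z τ * Real.sqrt (z τ) := by
    refine intervalIntegral.integral_nonneg hst fun u hu => ?_
    exact mul_nonneg (hzn u (hs.trans hu.1)
      (lt_of_le_of_lt (ENNReal.ofReal_le_ofReal hu.2) ht)) (Real.sqrt_nonneg _)
  have h1 := hdiss s t hs hst ht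
  have h2 := hobs s t hs hst ht
  have het := hen t (hs.trans hst) ht
  have hes := hen s hs hts
  have hd1 : (∫ τ in s..t, d τ) ≤ e s + c₁ * ∫ τ in s..t, z τ * Real.sqrt (z τ) := by
    linarith
  have het1 : e t ≤ e s + c₁ * ∫ τ in s..t, z τ * Real.sqrt (z τ) := by
    have hId : 0 ≤ ∫ τ in s..t, d τ := by
      refine intervalIntegral.integral_nonneg hst fun u hu => ?_
      exact hdn u (hs.trans hu.1) (lt_of_le_of_lt (ENNReal.ofReal_le_ofReal hu.2) ht)
    linarith
  have h3 : c₂ * (∫ τ in s..t, d τ) ≤ c₂ * (e s + c₁ * ∫ τ in s..t, z τ * Real.sqrt (z τ)) :=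
    mul_le_mul_of_nonneg_left hd1 hc₂.le
  have h4 : c₃ * e t ≤ c₃ * (e s + c₁ * ∫ τ in s..t, z τ * Real.sqrt (z τ)) :=
    mul_le_mul_of_nonneg_left het1 hc₃.le
  nlinarith [h2, h3, h4, het1, hIZ]
end
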